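/- Let n ≥ 1 and 0 < α < n. Then there is a constant C (depending only on n and α) such that for every f ∈ L¹(ℝⁿ) and every λ > 0, the Lebesgue measure of the set {x ∈ ℝⁿ : M_α f(x) > λ} is at most C (λ⁻¹ ‖f‖_{L¹(ℝⁿ)})^{n/(n−α)}. -/

import Mathlib

open MeasureTheory Metric Set
open scoped ENNReal NNReal

/-- The fractional maximal function `M_α f` on `ℝⁿ`:
`M_α f (x) = sup_{B ∋ x} |B|^{α/n - 1} ∫_B |f|`. -/
noncomputable def fracMax (n : ℕ) (α : ℝ) (f : EuclideanSpace ℝ (Fin n) → ℝ)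
    (x : EuclideanSpace ℝ (Fin n)) : ℝ≥0∞ :=
  ⨆ (c : EuclideanSpace ℝ (Fin n)) (r : ℝ) (_ : 0 < r) (_ : x ∈ ball c r),
    volume (ball c r) ^ (α / n - 1) * ∫⁻ y in ball c r, (‖f y‖₊ : ℝ≥0∞)

/-- The fractional maximal commutator `M_{α,b} f`:
`M_{α,b} f (x) = sup_{B ∋ x} |B|^{α/n - 1} ∫_B |b(x) - b(y)| |f(y)| dy`. -/
noncomputable def fracMaxComm (n : ℕ) (α : ℝ) (b f : EuclideanSpace ℝ (Fin n) → ℝ)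
    (x : EuclideanSpace ℝ (Fin n)) : ℝ≥0∞ :=
  ⨆ (c : EuclideanSpace ℝ (Fin n)) (r : ℝ) (_ : 0 < r) (_ : x ∈ ball c r),
    volume (ball c r) ^ (α / n - 1) *
      ∫⁻ y in ball c r, (‖b x - b y‖₊ : ℝ≥0∞) * (‖f y‖₊ : ℝ≥0∞)

/-- The local fractional maximal function `M_{α,B₀} f`, supremum over balls `B` with
`x ∈ B ⊆ B₀`. For `α = 0` this is the local Hardy–Littlewood maximal function `M_{B₀}`. -/
noncomputable def fracMaxLocal (n : ℕ) (α : ℝ) (B₀ : Set (EuclideanSpace ℝ (Fin n)))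
    (f : EuclideanSpace ℝ (Fin n) → ℝ) (x : EuclideanSpace ℝ (Fin n)) : ℝ≥0∞ :=
  ⨆ (c : EuclideanSpace ℝ (Fin n)) (r : ℝ) (_ : 0 < r) (_ : x ∈ ball c r)
    (_ : ball c r ⊆ B₀),
    volume (ball c r) ^ (α / n - 1) * ∫⁻ y in ball c r, (‖f y‖₊ : ℝ≥0∞)

/-- The average `b_B = |B|⁻¹ ∫_B b` of `b` over the ball `B = ball c r`. -/
noncomputable def ballAvg (n : ℕ) (b : EuclideanSpace ℝ (Fin n) → ℝ)
    (c : EuclideanSpace ℝ (Fin n)) (r : ℝ) : ℝ :=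
  (volume (ball c r)).toReal⁻¹ * ∫ y in ball c r, b y

/-! If `M_α f (x) > λ`, some ball `B ∋ x` has `|B| ^ (1 - α/n) < λ⁻¹ ∫_B |f|`, so with
`p = n / (n - α)` we get `|B| ≤ (λ⁻¹ ∫_B |f|) ^ p ≤ (λ⁻¹ ‖f‖₁) ^ (p - 1) λ⁻¹ ∫_B |f|`.
The superlevel set is therefore covered by balls of bounded radius satisfying `|B| ≤ K ∫_B |f|`
with `K = (λ⁻¹ ‖f‖₁) ^ (p - 1) λ⁻¹`. Vitali's covering lemma extracts a disjoint subfamily whose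
4-fold enlargements cover the union, whence the measure is at most
`4 ^ n K ‖f‖₁ = 4 ^ n (λ⁻¹ ‖f‖₁) ^ p`. -/

namespace ENNReal

theorem rpow_sub_one_mul_self (x : ℝ≥0∞) {p : ℝ} (hp : 1 ≤ p) : x ^ (p - 1) * x = x ^ p := by
  conv_rhs => rw [← sub_add_cancel p 1, rpow_add_of_nonneg _ _ (sub_nonneg.2 hp) zero_le_one,
    rpow_one]

theorem rpow_le_rpow_sub_one_mul {x y : ℝ≥0∞} (hxy : x ≤ y) {p : ℝ} (hp : 1 ≤ p) :
    x ^ p ≤ y ^ (p - 1) * x := by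
  rw [← rpow_sub_one_mul_self x hp]
  gcongr

theorem le_rpow_of_lt_rpow_neg_inv_mul {V Λ I : ℝ≥0∞} {p : ℝ} (hp : 0 < p) (hV0 : V ≠ 0)
    (hV : V ≠ ∞) (hΛ : Λ ≠ 0) (h : Λ < V ^ (-p⁻¹) * I) : V ≤ (Λ⁻¹ * I) ^ p := by
  have hΛI : Λ * V ^ p⁻¹ ≤ I := by
    calc Λ * V ^ p⁻¹ ≤ V ^ (-p⁻¹) * I * V ^ p⁻¹ := by gcongr
      _ = I := by
        rw [mul_comm, ← mul_assoc, ← rpow_add _ _ hV0 hV, add_neg_cancel, rpow_zero, one_mul]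
  have hΛ' : Λ ≠ ∞ := ne_top_of_lt h
  calc V = (V ^ p⁻¹) ^ p := by rw [← rpow_mul, inv_mul_cancel₀ hp.ne', rpow_one]
    _ ≤ (Λ⁻¹ * I) ^ p := by gcongr; exact (mul_le_iff_le_inv hΛ hΛ').1 hΛI

end ENNReal

section Covering

open Module

variable {E : Type*} [NormedAddCommGroup E] [NormedSpace ℝ E] [FiniteDimensional ℝ E]
  [MeasurableSpace E] [BorelSpace E] (μ : Measure E) [μ.IsAddHaarMeasure]

theorem addHaar_closedBall_mul_radius (x : E) {s r : ℝ} (hs : 0 ≤ s) (hr : 0 < r) :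
    μ (closedBall x (s * r)) = ENNReal.ofReal (s ^ finrank ℝ E) * μ (ball x r) := by
  rw [Measure.addHaar_closedBall μ x (mul_nonneg hs hr.le), Measure.addHaar_ball_of_pos μ x hr,
    mul_pow, ENNReal.ofReal_mul (by positivity), mul_assoc]

theorem exists_radius_le_of_measure_ball_le [Nontrivial E] {V : ℝ≥0∞} (hV : V ≠ ∞) :
    ∃ R : ℝ, ∀ (c : E) (r : ℝ), 0 < r → μ (ball c r) ≤ V → r ≤ R := by
  refine ⟨max 1 (V / μ (ball 0 1)).toReal, fun c r hr hrV => ?_⟩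
  rcases le_or_gt r 1 with hr1 | hr1
  · exact le_max_of_le_left hr1
  refine le_max_of_le_right ?_
  have hball0 : μ (ball (0 : E) 1) ≠ 0 := (measure_ball_pos μ _ one_pos).ne'
  have hball : μ (ball (0 : E) 1) ≠ ∞ := measure_ball_lt_top.ne
  rw [Measure.addHaar_ball_of_pos μ c hr,
    ← ENNReal.le_div_iff_mul_le (Or.inl hball0) (Or.inl hball)] at hrV
  calc r ≤ r ^ finrank ℝ E := le_self_pow₀ hr1.le finrank_pos.ne'
    _ ≤ (V / μ (ball 0 1)).toReal :=
      (ENNReal.ofReal_le_iff_le_toReal (ENNReal.div_ne_top hV hball0)).1 hrV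

theorem measure_biUnion_ball_le_mul_lintegral [Nontrivial E] {t : Set (E × ℝ)} {K : ℝ≥0∞}
    {g : E → ℝ≥0∞} (hfin : K * ∫⁻ y, g y ∂μ ≠ ∞)
    (ht : ∀ q ∈ t, 0 < q.2 ∧ μ (ball q.1 q.2) ≤ K * ∫⁻ y in ball q.1 q.2, g y ∂μ) :
    μ (⋃ q ∈ t, ball q.1 q.2) ≤ 4 ^ finrank ℝ E * K * ∫⁻ y, g y ∂μ := by
  have hball_le : ∀ q ∈ t, μ (ball q.1 q.2) ≤ K * ∫⁻ y, g y ∂μ := fun q hq =>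
    (ht q hq).2.trans (by gcongr; exact Measure.restrict_le_self)
  obtain ⟨R, hR⟩ := exists_radius_le_of_measure_ball_le μ hfin
  obtain ⟨u, hut, hu_disj, hu_cover⟩ :=
    Vitali.exists_disjoint_subfamily_covering_enlargement_closedBall t Prod.fst Prod.snd R
      (fun q hq => hR q.1 q.2 (ht q hq).1 (hball_le q hq)) 4 (by norm_num)
  have hu_disj' : u.PairwiseDisjoint fun q => ball q.1 q.2 :=
    hu_disj.mono fun _ => ball_subset_closedBall
  have hu_count : u.Countable := hu_disj'.countable_of_isOpen (fun _ _ => isOpen_ball)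
    fun q hq => nonempty_ball.2 (ht q (hut hq)).1
  have hcover : ⋃ q ∈ t, ball q.1 q.2 ⊆ ⋃ q ∈ u, closedBall q.1 (4 * q.2) :=
    iUnion₂_subset fun q hq => by
      obtain ⟨q', hq'u, hsub⟩ := hu_cover q hq
      exact ball_subset_closedBall.trans <| hsub.trans <|
        subset_biUnion_of_mem (u := fun q : E × ℝ => closedBall q.1 (4 * q.2)) hq'u
  calc μ (⋃ q ∈ t, ball q.1 q.2)
      ≤ ∑' q : u, μ (closedBall q.1.1 (4 * q.1.2)) :=
        (measure_mono hcover).trans (measure_biUnion_le μ hu_count _)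
    _ = ∑' q : u, 4 ^ finrank ℝ E * μ (ball q.1.1 q.1.2) := tsum_congr fun q => by
        rw [addHaar_closedBall_mul_radius μ _ zero_le_four (ht q (hut q.2)).1,
          ENNReal.ofReal_pow zero_le_four, ENNReal.ofReal_ofNat]
    _ ≤ ∑' q : u, 4 ^ finrank ℝ E * (K * ∫⁻ y in ball q.1.1 q.1.2, g y ∂μ) := by
        gcongr with q
        exact (ht q (hut q.2)).2
    _ = 4 ^ finrank ℝ E * K * ∫⁻ y in ⋃ q ∈ u, ball q.1 q.2, g y ∂μ := by
        rw [lintegral_biUnion hu_count (fun _ _ => measurableSet_ball) hu_disj',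
          ENNReal.tsum_mul_left, ENNReal.tsum_mul_left, mul_assoc]
    _ ≤ 4 ^ finrank ℝ E * K * ∫⁻ y, g y ∂μ := by
        gcongr
        exact Measure.restrict_le_self

end Covering

theorem volume_setOf_lt_fracMax_le {n : ℕ} {α : ℝ} (hα0 : 0 ≤ α) (hαn : α < n)
    (f : EuclideanSpace ℝ (Fin n) → ℝ) (hf : ∫⁻ y, (‖f y‖₊ : ℝ≥0∞) ≠ ∞) {Λ : ℝ≥0∞}
    (hΛ : Λ ≠ 0) :
    volume {x | Λ < fracMax n α f x} ≤
      4 ^ n * (Λ⁻¹ * ∫⁻ y, (‖f y‖₊ : ℝ≥0∞)) ^ ((n : ℝ) / (n - α)) := by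
  have hn : (0 : ℝ) < n := hα0.trans_lt hαn
  have : Nonempty (Fin n) := ⟨⟨0, Nat.cast_pos.1 hn⟩⟩
  set N := ∫⁻ y, (‖f y‖₊ : ℝ≥0∞)
  set p : ℝ := n / (n - α)
  have hp : 1 ≤ p := (one_le_div (by linarith)).2 (by linarith)
  have hexp : α / n - 1 = -p⁻¹ := by
    simp only [p, inv_div]
    field_simp
    ring
  set K := (Λ⁻¹ * N) ^ (p - 1) * Λ⁻¹
  have hKN : K * N = (Λ⁻¹ * N) ^ p := by
    rw [mul_assoc, ENNReal.rpow_sub_one_mul_self _ hp]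
  set t := {q : EuclideanSpace ℝ (Fin n) × ℝ | 0 < q.2 ∧
    Λ < volume (ball q.1 q.2) ^ (α / n - 1) * ∫⁻ y in ball q.1 q.2, (‖f y‖₊ : ℝ≥0∞)}
  have hsub : {x | Λ < fracMax n α f x} ⊆ ⋃ q ∈ t, ball q.1 q.2 := by
    intro x hx
    simp only [mem_ofPred_eq, fracMax, lt_iSup_iff] at hx
    obtain ⟨c, r, hr, hxr, hlt⟩ := hx
    exact mem_biUnion (x := (c, r)) ⟨hr, hlt⟩ hxr
  have hball : ∀ q ∈ t, 0 < q.2 ∧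
      volume (ball q.1 q.2) ≤ K * ∫⁻ y in ball q.1 q.2, (‖f y‖₊ : ℝ≥0∞) := by
    rintro ⟨c, r⟩ ⟨hr, hlt⟩
    refine ⟨hr, ?_⟩
    rw [hexp] at hlt
    set I := ∫⁻ y in ball c r, (‖f y‖₊ : ℝ≥0∞)
    calc volume (ball c r) ≤ (Λ⁻¹ * I) ^ p :=
          ENNReal.le_rpow_of_lt_rpow_neg_inv_mul (by linarith) (measure_ball_pos _ _ hr).ne'
            measure_ball_lt_top.ne hΛ hlt
      _ ≤ (Λ⁻¹ * N) ^ (p - 1) * (Λ⁻¹ * I) :=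
          ENNReal.rpow_le_rpow_sub_one_mul (by gcongr; exact setLIntegral_le_lintegral _ _) hp
      _ = K * I := (mul_assoc _ _ _).symm
  have hfin : K * N ≠ ∞ := hKN ▸
    ENNReal.rpow_ne_top_of_nonneg (by linarith) (ENNReal.mul_ne_top (ENNReal.inv_ne_top.2 hΛ) hf)
  calc volume {x | Λ < fracMax n α f x} ≤ volume (⋃ q ∈ t, ball q.1 q.2) := measure_mono hsub
    _ ≤ 4 ^ Module.finrank ℝ (EuclideanSpace ℝ (Fin n)) * K * N :=
        measure_biUnion_ball_le_mul_lintegral volume hfin hball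
    _ = 4 ^ n * (Λ⁻¹ * N) ^ p := by rw [finrank_euclideanSpace_fin, mul_assoc, hKN]

theorem stmt17_general (n : ℕ) (α : ℝ) (hα0 : 0 < α) (hαn : α < n) :
    ∃ C : ℝ, 0 ≤ C ∧
      ∀ f : EuclideanSpace ℝ (Fin n) → ℝ, Integrable f volume →
        ∀ lam : ℝ, 0 < lam →
          volume {x | ENNReal.ofReal lam < fracMax n α f x} ≤
            ENNReal.ofReal
              (C * (lam⁻¹ * ∫ x, |f x|) ^ ((n : ℝ) / ((n : ℝ) - α))) := by
  have hp : 0 ≤ (n : ℝ) / (n - α) := div_nonneg n.cast_nonneg (by linarith)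
  refine ⟨4 ^ n, by positivity, fun f hf lam hlam => ?_⟩
  have hN : ∫⁻ y, (‖f y‖₊ : ℝ≥0∞) ≠ ∞ := hf.2.ne
  have hL1 : ∫ x, |f x| = (∫⁻ y, (‖f y‖₊ : ℝ≥0∞)).toReal :=
    integral_norm_eq_lintegral_enorm hf.1
  calc volume {x | ENNReal.ofReal lam < fracMax n α f x}
      ≤ 4 ^ n * ((ENNReal.ofReal lam)⁻¹ * ∫⁻ y, (‖f y‖₊ : ℝ≥0∞)) ^ ((n : ℝ) / (n - α)) :=
        volume_setOf_lt_fracMax_le hα0.le hαn f hN (ENNReal.ofReal_pos.2 hlam).ne'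
    _ = _ := by
        rw [hL1, ENNReal.ofReal_mul (by positivity), ENNReal.ofReal_pow zero_le_four,
          ENNReal.ofReal_ofNat, ← ENNReal.ofReal_rpow_of_nonneg (by positivity) hp,
          ENNReal.ofReal_mul (by positivity), ENNReal.ofReal_inv_of_pos hlam,
          ENNReal.ofReal_toReal hN]

/-- weak-type estimate for `M_α` at `p = 1`:
`|{x : M_α f (x) > λ}| ≤ C (λ⁻¹ ‖f‖_{L¹})^{n/(n-α)}`. -/
theorem stmt17 (n : ℕ) (hn : 1 ≤ n) (α : ℝ) (hα0 : 0 < α) (hαn : α < n) :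
    ∃ C : ℝ, 0 ≤ C ∧
      ∀ f : EuclideanSpace ℝ (Fin n) → ℝ, Integrable f volume →
        ∀ lam : ℝ, 0 < lam →
          volume {x | ENNReal.ofReal lam < fracMax n α f x} ≤
            ENNReal.ofReal
              (C * (lam⁻¹ * ∫ x, |f x|) ^ ((n : ℝ) / ((n : ℝ) - α))) :=
  stmt17_general n α hα0 hαn
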